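/- arXiv:1012.0867 — 3 statements merged into one kernel-verified Lean document; each statement's English description precedes it below -/
import Mathlib

section
/- Let s ∈ (0,1) and a = 1-2s. The Poisson kernel P_s(x,y) = p_{n,s} · y^{1-a} / (|x|^2 + y^2)^{(n+1-a)/2} satisfies div(y^a ∇P_s) = 0 pointwise in the open upper half-space R^{n+1}_+ = {(x,y) : x ∈ R^n, y > 0}. -/
/-!
With `q = ‖x‖² + y²` and `γ = -(n+1-a)/2` we have `P = p y^(1-a) q^γ`, and every second
derivative involved is one of `t ↦ (c + t²)^γ`: along `eᵢ`,
`‖x + t eᵢ‖² + y² = (q - xᵢ²) + (xᵢ + t)²`, while in the vertical direction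
`y^a ∂_y (y^(1-a) g) = (1-a) g + y g'`, whose derivative is `(2-a) g' + y g''`.
-/

open Set Filter

/-- Tangential Laplacian `Δ_x u(x,y)` of `u : ℝ^n × (0,∞) → ℝ`, computed coordinatewise. -/
noncomputable def lapX (n : ℕ) (u : EuclideanSpace ℝ (Fin n) → ℝ → ℝ)
    (x : EuclideanSpace ℝ (Fin n)) (y : ℝ) : ℝ :=
  ∑ i : Fin n, deriv (fun t : ℝ =>
    deriv (fun t' : ℝ => u (x + t' • EuclideanSpace.single i (1 : ℝ)) y) t) 0

open scoped Topology

lemma hasDerivAt_add_sq_rpow {c t : ℝ} (γ : ℝ) (h : c + t ^ 2 ≠ 0) :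
    HasDerivAt (fun t => (c + t ^ 2) ^ γ) (2 * γ * t * (c + t ^ 2) ^ (γ - 1)) t := by
  convert ((hasDerivAt_pow 2 t).const_add c).rpow_const (p := γ) (Or.inl h) using 1
  push_cast
  ring

lemma hasDerivAt_deriv_add_sq_rpow {c b : ℝ} (γ : ℝ) (h : c + b ^ 2 ≠ 0) :
    HasDerivAt (deriv fun t => (c + t ^ 2) ^ γ)
      (2 * γ * (c + b ^ 2) ^ (γ - 1) + 4 * γ * (γ - 1) * b ^ 2 * (c + b ^ 2) ^ (γ - 2)) b := by
  have hne : ∀ᶠ t in 𝓝 b, c + t ^ 2 ≠ 0 :=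
    (continuous_const.add (continuous_pow 2)).continuousAt.eventually_ne h
  have hderiv : (deriv fun t => (c + t ^ 2) ^ γ) =ᶠ[𝓝 b]
      fun t => 2 * γ * t * (c + t ^ 2) ^ (γ - 1) :=
    hne.mono fun t ht => (hasDerivAt_add_sq_rpow γ ht).deriv
  refine HasDerivAt.congr_of_eventuallyEq ?_ hderiv
  refine (((hasDerivAt_id b).const_mul (2 * γ)).mul
    (hasDerivAt_add_sq_rpow (γ - 1) h)).congr_deriv ?_
  rw [show γ - 1 - 1 = γ - 2 by ring, id]
  ring

lemma deriv_rpow_mul_deriv_rpow_one_sub_mul {g : ℝ → ℝ} {a y : ℝ} (hy : 0 < y)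
    (hg : ∀ᶠ t in 𝓝 y, DifferentiableAt ℝ g t) (hg' : DifferentiableAt ℝ (deriv g) y) :
    deriv (fun t => t ^ a * deriv (fun t' => t' ^ (1 - a) * g t') t) y
      = (2 - a) * deriv g y + y * deriv (deriv g) y := by
  have hsimp : (fun t => t ^ a * deriv (fun t' => t' ^ (1 - a) * g t') t) =ᶠ[𝓝 y]
      fun t => (1 - a) * g t + t * deriv g t := by
    filter_upwards [hg, Ioi_mem_nhds hy] with t hgt (ht : 0 < t)
    have hd : HasDerivAt (fun t' => t' ^ (1 - a) * g t') _ t :=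
      (Real.hasDerivAt_rpow_const (p := 1 - a) (Or.inl ht.ne')).mul hgt.hasDerivAt
    rw [hd.deriv]
    have h1 : t ^ a * t ^ (1 - a - 1) = 1 := by
      rw [← Real.rpow_add ht]; norm_num
    have h2 : t ^ a * t ^ (1 - a) = t := by
      rw [← Real.rpow_add ht]; norm_num
    linear_combination (1 - a) * g t * h1 + deriv g t * h2
  rw [hsimp.deriv_eq]
  have hd : HasDerivAt (fun t => (1 - a) * g t + t * deriv g t) _ y :=
    (hg.self_of_nhds.hasDerivAt.const_mul (1 - a)).add ((hasDerivAt_id y).mul hg'.hasDerivAt)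
  rw [hd.deriv]
  simp only [id]
  ring

lemma norm_add_smul_single_sq {ι : Type*} [Fintype ι] [DecidableEq ι]
    (x : EuclideanSpace ℝ ι) (i : ι) (t : ℝ) :
    ‖x + t • EuclideanSpace.single i 1‖ ^ 2 = ‖x‖ ^ 2 - x i ^ 2 + (x i + t) ^ 2 := by
  rw [norm_add_sq_real, real_inner_smul_right, EuclideanSpace.inner_single_right, norm_smul,
    PiLp.norm_single]
  simp only [RCLike.conj_to_real, norm_one, Real.norm_eq_abs, mul_pow, sq_abs]
  ring

lemma deriv_deriv_const_mul_comp_const_add (K b : ℝ) (g : ℝ → ℝ) :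
    deriv (fun t => deriv (fun t' => K * g (b + t')) t) 0 = K * deriv (deriv g) b := by
  simp only [deriv_const_mul_field', deriv_comp_const_add, add_zero]

lemma lapX_mul_norm_sq_add_sq_rpow (n : ℕ) (K : ℝ → ℝ) (γ : ℝ)
    (x : EuclideanSpace ℝ (Fin n)) {y : ℝ} (h : ‖x‖ ^ 2 + y ^ 2 ≠ 0) :
    lapX n (fun x y => K y * (‖x‖ ^ 2 + y ^ 2) ^ γ) x y
      = K y * (2 * n * γ * (‖x‖ ^ 2 + y ^ 2) ^ (γ - 1)
          + 4 * γ * (γ - 1) * ‖x‖ ^ 2 * (‖x‖ ^ 2 + y ^ 2) ^ (γ - 2)) := by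
  set q := ‖x‖ ^ 2 + y ^ 2
  have hline : ∀ i : Fin n,
      deriv (fun t : ℝ => deriv (fun t' : ℝ =>
        K y * (‖x + t' • EuclideanSpace.single i (1 : ℝ)‖ ^ 2 + y ^ 2) ^ γ) t) 0
      = K y * (2 * γ * q ^ (γ - 1) + 4 * γ * (γ - 1) * x i ^ 2 * q ^ (γ - 2)) := by
    intro i
    have hshift : ∀ t : ℝ, ‖x + t • EuclideanSpace.single i (1 : ℝ)‖ ^ 2 + y ^ 2
        = q - x i ^ 2 + (x i + t) ^ 2 := fun t => by
      rw [norm_add_smul_single_sq]; ring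
    have hc : q - x i ^ 2 + x i ^ 2 ≠ 0 := by rwa [sub_add_cancel]
    simp_rw [hshift]
    rw [deriv_deriv_const_mul_comp_const_add (K y) (x i) (fun t => (q - x i ^ 2 + t ^ 2) ^ γ),
      (hasDerivAt_deriv_add_sq_rpow γ hc).deriv, sub_add_cancel]
  have hsum : ∑ i, x i ^ 2 = ‖x‖ ^ 2 := by
    simp [EuclideanSpace.norm_sq_eq]
  simp only [lapX, hline, ← Finset.mul_sum, Finset.sum_add_distrib, ← Finset.sum_mul, hsum,
    Finset.sum_const, Finset.card_univ, Fintype.card_fin, nsmul_eq_mul]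
  ring

lemma deriv_rpow_mul_deriv_rpow_one_sub_mul_add_sq_rpow (p γ : ℝ) {N a y : ℝ} (hN : 0 ≤ N)
    (hy : 0 < y) :
    deriv (fun t => t ^ a * deriv (fun t' => p * t' ^ (1 - a) * (N + t' ^ 2) ^ γ) t) y
      = p * ((2 - a) * (2 * γ * y * (N + y ^ 2) ^ (γ - 1))
        + y * (2 * γ * (N + y ^ 2) ^ (γ - 1)
          + 4 * γ * (γ - 1) * y ^ 2 * (N + y ^ 2) ^ (γ - 2))) := by
  set g : ℝ → ℝ := fun t => p * (N + t ^ 2) ^ γ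
  have hg : deriv g = fun t => p * deriv (fun t => (N + t ^ 2) ^ γ) t :=
    deriv_const_mul_field' p
  have hq : N + y ^ 2 ≠ 0 := by positivity
  have hg1 := hasDerivAt_add_sq_rpow γ hq
  have hg2 := hasDerivAt_deriv_add_sq_rpow γ hq
  have hg_diff : ∀ᶠ t in 𝓝 y, DifferentiableAt ℝ g t := by
    filter_upwards [Ioi_mem_nhds hy] with t (ht : 0 < t)
    exact ((hasDerivAt_add_sq_rpow γ (by positivity)).const_mul p).differentiableAt
  have hg'_diff : DifferentiableAt ℝ (deriv g) y := by
    rw [hg]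
    exact (hg2.const_mul p).differentiableAt
  have hfun : (fun t' => p * t' ^ (1 - a) * (N + t' ^ 2) ^ γ) = fun t' => t' ^ (1 - a) * g t' := by
    ext t'
    ring
  rw [hfun, deriv_rpow_mul_deriv_rpow_one_sub_mul hy hg_diff hg'_diff, hg, deriv_const_mul_field']
  beta_reduce
  rw [hg1.deriv, hg2.deriv]
  ring

theorem poisson_kernel_solves_La_general (n : ℕ) (a p : ℝ)
    (P : EuclideanSpace ℝ (Fin n) → ℝ → ℝ)
    (hP : ∀ x y, P x y = p * y ^ (1 - a) / (‖x‖ ^ 2 + y ^ 2) ^ (((n : ℝ) + 1 - a) / 2)) :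
    ∀ (x : EuclideanSpace ℝ (Fin n)) (y : ℝ), 0 < y →
      y ^ a * lapX n P x y + deriv (fun t : ℝ => t ^ a * deriv (fun t' : ℝ => P x t') t) y
        = 0 := by
  intro x y hy
  set γ : ℝ := -(((n : ℝ) + 1 - a) / 2)
  set q := ‖x‖ ^ 2 + y ^ 2
  have hq0 : 0 < q := by positivity
  have hP' : P = fun x y => p * y ^ (1 - a) * (‖x‖ ^ 2 + y ^ 2) ^ γ := by
    funext x y
    rw [hP, Real.rpow_neg (by positivity), div_eq_mul_inv]
  have hyy : y ^ a * y ^ (1 - a) = y := by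
    rw [← Real.rpow_add hy]; norm_num
  have hqq : q ^ (γ - 1) = q * q ^ (γ - 2) := by
    rw [show γ - 1 = γ - 2 + 1 by ring, Real.rpow_add_one hq0.ne']
    ring
  simp only [hP']
  rw [lapX_mul_norm_sq_add_sq_rpow n (fun y => p * y ^ (1 - a)) γ x hq0.ne',
    deriv_rpow_mul_deriv_rpow_one_sub_mul_add_sq_rpow p γ (sq_nonneg ‖x‖) hy, hqq]
  -- the total is `p y γ q^(γ-1) (2n + 2(2-a) + 2 + 4(γ-1))`; the bracket vanishes for this `γ`
  linear_combination (p * (2 * n * γ * q + 4 * γ * (γ - 1) * ‖x‖ ^ 2) * q ^ (γ - 2)) * hyy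

/-- Let `s ∈ (0,1)`, `a = 1-2s`. The Poisson kernel
`P_s(x,y) = p · y^{1-a} / (|x|² + y²)^{(n+1-a)/2}` satisfies
`div(y^a ∇P_s) = y^a Δ_x P_s + ∂_y(y^a ∂_y P_s) = 0` pointwise in the open upper
half-space `{y > 0}`. -/
theorem poisson_kernel_solves_La (n : ℕ) (s a p : ℝ) (hs : s ∈ Ioo (0 : ℝ) 1)
    (ha : a = 1 - 2 * s) (hp : 0 < p)
    (P : EuclideanSpace ℝ (Fin n) → ℝ → ℝ)
    (hP : ∀ x y, P x y = p * y ^ (1 - a) / (‖x‖ ^ 2 + y ^ 2) ^ (((n : ℝ) + 1 - a) / 2)) :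
    ∀ (x : EuclideanSpace ℝ (Fin n)) (y : ℝ), 0 < y →
      y ^ a * lapX n P x y + deriv (fun t : ℝ => t ^ a * deriv (fun t' : ℝ => P x t') t) y
        = 0 :=
  poisson_kernel_solves_La_general n a p P hP
end

section
/- Let f : R → R be continuously differentiable. Suppose v : R → R is a bounded C^2 layer solution of -v'' = f(v) on R, i.e. v' > 0 on R and v(x) → ±1 as x → ±∞. Then, with G' = -f, the Hamiltonian identity (1/2)(v'(x))^2 = G(v(x)) - G(1) holds for all x ∈ R; in particular G(1) = G(-1) and G > G(1) on (-1,1). -/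
open Set Filter Topology

/-!
Multiplying `v'' + f(v) = 0` by `v'` shows that `(v')²/2 - G(v)` is constant, say `K`. As `x → ±∞`
the square `(v')²` then converges to `2 (G(±1) + K)`, and a function with a finite limit cannot have
`(v')²` tend to a positive limit, so `G(1) = G(-1) = -K`. Finally `v` takes every value in `(-1, 1)`,
where `G(v) - G(1) = (v')²/2 > 0`.
-/

theorem energy_eq_of_deriv_deriv_eq {f G v : ℝ → ℝ} (hv : Differentiable ℝ v)
    (hv' : Differentiable ℝ (deriv v)) (hG : ∀ t, HasDerivAt G (-(f t)) t)
    (heq : ∀ x, -(deriv (deriv v) x) = f (v x)) (x y : ℝ) :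
    deriv v x ^ 2 / 2 - G (v x) = deriv v y ^ 2 / 2 - G (v y) := by
  have hE : ∀ x, HasDerivAt (fun x => deriv v x ^ 2 / 2 - G (v x)) 0 x := fun x => by
    refine ((((hv' x).hasDerivAt.pow 2).div_const 2).sub
      ((hG (v x)).comp x (hv x).hasDerivAt)).congr_deriv ?_
    rw [← neg_eq_iff_eq_neg.mp (heq x)]
    push_cast
    ring
  exact is_const_of_deriv_eq_zero (fun x => (hE x).differentiableAt) (fun x => (hE x).deriv) x y

theorem eq_zero_of_tendsto_atTop_of_tendsto_deriv_sq {v : ℝ → ℝ} {L ℓ : ℝ}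
    (hv : Differentiable ℝ v) (hL : Tendsto v atTop (𝓝 L))
    (hℓ : Tendsto (fun x => deriv v x ^ 2) atTop (𝓝 ℓ)) : ℓ = 0 := by
  -- mean value theorem on `[x, x + 1]`: `v'(ξ x)² = (v (x + 1) - v x)² → 0`
  choose ξ hξ hslope using fun x : ℝ =>
    exists_deriv_eq_slope v (lt_add_one x) hv.continuous.continuousOn hv.differentiableOn
  have hξ_top : Tendsto ξ atTop atTop := tendsto_atTop_mono (fun x => (hξ x).1.le) tendsto_id
  have hdiff : Tendsto (fun x => (v (x + 1) - v x) ^ 2) atTop (𝓝 0) := by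
    simpa using ((hL.comp (tendsto_atTop_add_const_right _ 1 tendsto_id)).sub hL).pow 2
  refine tendsto_nhds_unique (hℓ.comp hξ_top) (hdiff.congr fun x => ?_)
  simp [hslope]

theorem eq_zero_of_tendsto_atBot_of_tendsto_deriv_sq {v : ℝ → ℝ} {L ℓ : ℝ}
    (hv : Differentiable ℝ v) (hL : Tendsto v atBot (𝓝 L))
    (hℓ : Tendsto (fun x => deriv v x ^ 2) atBot (𝓝 ℓ)) : ℓ = 0 := by
  refine eq_zero_of_tendsto_atTop_of_tendsto_deriv_sq (v := fun x => v (-x))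
    (hv.comp differentiable_neg) (hL.comp tendsto_neg_atTop_atBot) ?_
  simpa [Function.comp_def, deriv_comp_neg] using hℓ.comp tendsto_neg_atTop_atBot

theorem hamiltonian_identity_ODE_general (f G v : ℝ → ℝ)
    (hv : ContDiff ℝ 2 v)
    (hG : ∀ t, HasDerivAt G (-(f t)) t)
    (heq : ∀ x, -(deriv (deriv v) x) = f (v x))
    (hmono : ∀ x, 0 < deriv v x)
    (hlimtop : Tendsto v atTop (𝓝 1))
    (hlimbot : Tendsto v atBot (𝓝 (-1))) :
    (∀ x, (deriv v x) ^ 2 / 2 = G (v x) - G 1) ∧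
    G 1 = G (-1) ∧
    (∀ t ∈ Ioo (-1 : ℝ) 1, G 1 < G t) := by
  have hdv : Differentiable ℝ v := hv.differentiable two_ne_zero
  have hdv' : Differentiable ℝ (deriv v) := hv.differentiable_deriv_two
  have hGc : Continuous G := continuous_iff_continuousAt.2 fun t => (hG t).continuousAt
  set K := deriv v 0 ^ 2 / 2 - G (v 0)
  have hE x : deriv v x ^ 2 / 2 - G (v x) = K :=
    energy_eq_of_deriv_deriv_eq hdv hdv' hG heq x 0
  have hsq {l : Filter ℝ} {L : ℝ} (hL : Tendsto v l (𝓝 L)) :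
      Tendsto (fun x => deriv v x ^ 2) l (𝓝 (2 * (G L + K))) :=
    (((hGc.tendsto L).comp hL).add_const K).const_mul 2 |>.congr fun x => by
      simp only [Function.comp_apply, ← hE x]; ring
  have htop := eq_zero_of_tendsto_atTop_of_tendsto_deriv_sq hdv hlimtop (hsq hlimtop)
  have hbot := eq_zero_of_tendsto_atBot_of_tendsto_deriv_sq hdv hlimbot (hsq hlimbot)
  have hid x : deriv v x ^ 2 / 2 = G (v x) - G 1 := by linarith [hE x]
  refine ⟨hid, by linarith, fun t ⟨ht₁, ht₂⟩ => ?_⟩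
  obtain ⟨x, rfl⟩ : t ∈ range v := mem_range_of_exists_le_of_exists_ge hdv.continuous
    ((hlimbot.eventually (gt_mem_nhds ht₁)).exists.imp fun _ => le_of_lt)
    ((hlimtop.eventually (lt_mem_nhds ht₂)).exists.imp fun _ => le_of_lt)
  nlinarith [hid x, hmono x]

/-- Let `f` be `C¹` and let `v` be a bounded `C²` layer solution of `-v'' = f(v)` on `ℝ`,
i.e. `v' > 0` and `v(x) → ±1` as `x → ±∞`. Then, with `G' = -f`, the Hamiltonian
identity `(1/2)(v')² = G(v) - G(1)` holds everywhere; in particular `G(1) = G(-1)` and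
`G > G(1)` on `(-1,1)`. -/
theorem hamiltonian_identity_ODE (f G v : ℝ → ℝ)
    (hf : ContDiff ℝ 1 f) (hv : ContDiff ℝ 2 v)
    (hbdd : ∃ M : ℝ, ∀ x, |v x| ≤ M)
    (hG : ∀ t, HasDerivAt G (-(f t)) t)
    (heq : ∀ x, -(deriv (deriv v) x) = f (v x))
    (hmono : ∀ x, 0 < deriv v x)
    (hlimtop : Tendsto v atTop (𝓝 1))
    (hlimbot : Tendsto v atBot (𝓝 (-1))) :
    (∀ x, (deriv v x) ^ 2 / 2 = G (v x) - G 1) ∧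
    G 1 = G (-1) ∧
    (∀ t ∈ Ioo (-1 : ℝ) 1, G 1 < G t) :=
  hamiltonian_identity_ODE_general f G v hv hG heq hmono hlimtop hlimbot
end

section
/- Let f be locally Lipschitz, let s ∈ (0,1), and suppose u is a continuous bounded function on the closed upper half-space with y^a u_y continuous up to {y=0} (a = 1-2s), satisfying div(y^a∇u) = 0 in R^{n+1}_+, ∂u/∂ν^a + d(x)u ≥ 0 on {y=0} for a bounded function d, u(x,0) → 0 as |x| → ∞, u(x,0) > 0 for x in some nonempty set H ⊂ R^n, and d(x) ≥ 0 for x ∉ H. Assume further the strong maximum principle and Hopf lemma for L_a (i.e., a nonconstant solution cannot attain an interior minimum, and at a boundary minimum point the conormal derivative ∂u/∂ν^a is strictly negative). Then u > 0 on the closed upper half-space. -/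
open Set Filter Topology

noncomputable section

variable (n : ℕ)

/-- Second tangential partial derivative `∂²_{x_i} u`. -/
def pdXX (i : Fin n) (u : EuclideanSpace ℝ (Fin n) × ℝ → ℝ)
    (q : EuclideanSpace ℝ (Fin n) × ℝ) : ℝ :=
  deriv (fun t : ℝ => deriv (fun t' : ℝ =>
    u (q.1 + t' • EuclideanSpace.single i (1 : ℝ), q.2)) t) 0

/-- Normal partial derivative `∂_y u`. -/
def pdY (u : EuclideanSpace ℝ (Fin n) × ℝ → ℝ) (q : EuclideanSpace ℝ (Fin n) × ℝ) : ℝ :=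
  deriv (fun t : ℝ => u (q.1, t)) q.2

/-!
The heart of the proof is a weak maximum principle. The barrier `κ|x|² + γ y^{1-a} - c y²`
with `n κ < c (a + 1)` satisfies `div(y^a ∇·) = 2 y^a (n κ - c (a + 1)) < 0` (as
`div(y^a ∇ y^{1-a}) = 0`), so `u` plus the barrier, which is coercive in `x`, attains its minimum
over a slab `0 ≤ y ≤ T` only on the slab's boundary. Taking `γ T^{1-a}` large enough to dominate
`u(·, T)` and letting `T → ∞` shows `inf u = inf u(·, 0)`.

If `u ≤ 0` somewhere, the trace, which vanishes at infinity, then attains a nonpositive global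
minimum of `u`. The minimum is not constant since `u(·, 0) > 0` on `H`, so by the strong maximum
principle it lies at a boundary point `x`. There `u(x, 0) ≤ 0` forces `x ∉ H`, hence `d x ≥ 0` and
`∂u/∂ν^a ≥ -d(x) u(x, 0) ≥ 0`, contradicting the Hopf lemma.
-/

theorem IsLocalMin.deriv_deriv_nonneg {f : ℝ → ℝ} {x : ℝ} (hmin : IsLocalMin f x)
    (hc : ContinuousAt f x) : 0 ≤ deriv (deriv f) x := by
  by_contra! hneg
  have hmax := isLocalMax_of_deriv_deriv_neg hneg hmin.deriv_eq_zero hc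
  have hconst : f =ᶠ[𝓝 x] fun _ => f x :=
    (hmin.and hmax).mono fun y hy => le_antisymm hy.2 hy.1
  have h0 : deriv f =ᶠ[𝓝 x] fun _ => 0 := by simpa using hconst.deriv
  simp [h0.deriv_eq] at hneg

theorem IsLocalMin.deriv_deriv_add_nonneg {f g : ℝ → ℝ} {x : ℝ}
    (hmin : IsLocalMin (fun t => f t + g t) x) (hf : ContDiffAt ℝ 2 f x)
    (hg : ContDiffAt ℝ 2 g x) : 0 ≤ deriv (deriv f) x + deriv (deriv g) x := by
  have h := hmin.deriv_deriv_nonneg (hf.add hg).continuousAt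
  have h2 := iteratedDeriv_fun_add hf hg
  simp only [iteratedDeriv_eq_iterate, Function.iterate_succ, Function.iterate_zero,
    Function.comp_apply, Function.id_def] at h2
  rwa [← h2]

theorem deriv_rpow_mul_deriv {f : ℝ → ℝ} {x : ℝ} (a : ℝ) (hf : ContDiffAt ℝ 2 f x)
    (hx : x ≠ 0) :
    deriv (fun t => t ^ a * deriv f t) x =
      a * x ^ (a - 1) * deriv f x + x ^ a * deriv (deriv f) x := by
  have hf' : DifferentiableAt ℝ (deriv f) x :=
    (hf.derivWithin (m := 1) (by norm_num)).differentiableAt one_ne_zero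
  exact ((Real.hasDerivAt_rpow_const (p := a) (Or.inl hx)).mul hf'.hasDerivAt).deriv

theorem IsLocalMin.deriv_rpow_mul_deriv_add_nonneg {f g : ℝ → ℝ} {x : ℝ} (a : ℝ)
    (hmin : IsLocalMin (fun t => f t + g t) x) (hx : 0 < x) (hf : ContDiffAt ℝ 2 f x)
    (hg : ContDiffAt ℝ 2 g x) :
    0 ≤ deriv (fun t => t ^ a * deriv f t) x + deriv (fun t => t ^ a * deriv g t) x := by
  have hd : deriv f x + deriv g x = 0 := by
    rw [← deriv_fun_add (hf.differentiableAt two_ne_zero) (hg.differentiableAt two_ne_zero)]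
    exact hmin.deriv_eq_zero
  have hdd := hmin.deriv_deriv_add_nonneg hf hg
  rw [deriv_rpow_mul_deriv a hf hx.ne', deriv_rpow_mul_deriv a hg hx.ne']
  have := mul_nonneg (Real.rpow_pos_of_pos hx a).le hdd
  linear_combination (-(a * x ^ (a - 1))) * hd + this

theorem deriv_deriv_norm_add_smul_sq {E : Type*} [NormedAddCommGroup E] [InnerProductSpace ℝ E]
    (x v : E) (s : ℝ) : deriv (deriv fun t : ℝ => ‖x + t • v‖ ^ 2) s = 2 * ‖v‖ ^ 2 := by
  have h : (fun t : ℝ => ‖x + t • v‖ ^ 2) =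
      fun t => ‖x‖ ^ 2 + 2 * inner ℝ x v * t + ‖v‖ ^ 2 * t ^ 2 := by
    ext t
    rw [norm_add_sq_real, real_inner_smul_right, norm_smul, mul_pow, Real.norm_eq_abs, sq_abs]
    ring
  have hd : deriv (fun t : ℝ => ‖x + t • v‖ ^ 2) =
      fun t => 2 * inner ℝ x v + ‖v‖ ^ 2 * (2 * t) := by
    ext t
    rw [h]
    exact (((hasDerivAt_id t).const_mul _).const_add _ |>.add
      ((hasDerivAt_pow 2 t).const_mul _)).deriv.trans (by simp)
  rw [hd]
  simp [mul_comm]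

theorem deriv_rpow_mul_deriv_rpow_sub_sq (a c γ : ℝ) {y : ℝ} (hy : 0 < y) :
    deriv (fun t => t ^ a * deriv (fun s => γ * s ^ (1 - a) - c * s ^ 2) t) y =
      -(2 * c * (a + 1) * y ^ a) := by
  have h : (fun t => t ^ a * deriv (fun s => γ * s ^ (1 - a) - c * s ^ 2) t) =ᶠ[𝓝 y]
      fun t => γ * (1 - a) - 2 * c * t ^ (a + 1) := by
    filter_upwards [Ioi_mem_nhds hy] with t (ht : 0 < t)
    have hd : HasDerivAt (fun s => γ * s ^ (1 - a) - c * s ^ 2)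
        (γ * ((1 - a) * t ^ (1 - a - 1)) - c * (2 * t)) t := by
      have := ((Real.hasDerivAt_rpow_const (p := 1 - a) (Or.inl ht.ne')).const_mul γ).fun_sub
        ((hasDerivAt_pow 2 t).const_mul c)
      simpa using this
    rw [hd.deriv, show 1 - a - 1 = -a by ring, Real.rpow_neg ht.le, Real.rpow_add ht,
      Real.rpow_one]
    field_simp
  rw [h.deriv_eq]
  have := ((Real.hasDerivAt_rpow_const (p := a + 1) (Or.inl hy.ne')).const_mul (2 * c)).const_sub
    (γ * (1 - a))
  rw [this.deriv]
  simp only [add_sub_cancel_right]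
  ring

noncomputable def barrier {E : Type*} [NormedAddCommGroup E] (a κ c γ : ℝ) (q : E × ℝ) : ℝ :=
  κ * ‖q.1‖ ^ 2 + (γ * q.2 ^ (1 - a) - c * q.2 ^ 2)

section
variable {E : Type*} [NormedAddCommGroup E] {a κ c γ : ℝ}

theorem continuous_barrier (ha : a ≤ 1) : Continuous (barrier (E := E) a κ c γ) := by
  have := Real.continuous_rpow_const (q := 1 - a) (by linarith)
  unfold barrier
  fun_prop

theorem barrier_zero (ha : a < 1) (x : E) : barrier a κ c γ (x, 0) = κ * ‖x‖ ^ 2 := by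
  simp [barrier, Real.zero_rpow (by linarith : 1 - a ≠ 0)]

theorem exists_isMinOn_add_barrier [ProperSpace E] {u : E × ℝ → ℝ} {M T : ℝ}
    (hucont : ContinuousOn u {q | 0 ≤ q.2}) (hM : ∀ q : E × ℝ, 0 ≤ q.2 → -M ≤ u q)
    (ha : a < 1) (hκ : 0 < κ) (hγ : 0 ≤ γ) (hT : 0 ≤ T) :
    ∃ p ∈ univ ×ˢ Icc 0 T, IsMinOn (fun q => u q + barrier a κ c γ q) (univ ×ˢ Icc 0 T) p := by
  set W := fun q => u q + barrier a κ c γ q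
  have hW : ContinuousOn W (univ ×ˢ Icc 0 T) :=
    (hucont.mono fun q hq => hq.2.1).add (continuous_barrier ha.le).continuousOn
  have h₀ : ((0 : E), (0 : ℝ)) ∈ univ ×ˢ Icc 0 T := ⟨trivial, le_rfl, hT⟩
  refine hW.exists_isMinOn' (isClosed_univ.prod isClosed_Icc) h₀ ?_
  set R := max (max 1 T) ((W (0, 0) + M + |c| * T ^ 2) / κ)
  filter_upwards [inf_le_left (b := 𝓟 (univ ×ˢ Icc 0 T))
    (isCompact_closedBall (0 : E × ℝ) R).compl_mem_cocompact,
    inf_le_right (a := cocompact (E × ℝ)) (mem_principal_self _)] with q hqR hqS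
  obtain ⟨-, hq0, hqT⟩ := hqS
  have hR1 : 1 ≤ R := (le_max_left _ _).trans (le_max_left _ _)
  have hRT : T ≤ R := (le_max_right _ _).trans (le_max_left _ _)
  have hRW : W (0, 0) + M + |c| * T ^ 2 ≤ κ * R := by
    rw [← div_le_iff₀' hκ]; exact le_max_right _ _
  have hq1 : R < ‖q.1‖ := by
    have hq : ‖q.1‖ ≤ R → R < |q.2| := by simpa [Prod.norm_def] using hqR
    by_contra! h
    linarith [hq h, abs_of_nonneg hq0]
  have hsq : R ≤ ‖q.1‖ ^ 2 := by nlinarith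
  have hcq : c * q.2 ^ 2 ≤ |c| * T ^ 2 :=
    mul_le_mul (le_abs_self c) (pow_le_pow_left₀ hq0 hqT 2) (sq_nonneg _) (abs_nonneg c)
  have hγq : 0 ≤ γ * q.2 ^ (1 - a) := mul_nonneg hγ (Real.rpow_nonneg hq0 _)
  have hκq := mul_le_mul_of_nonneg_left hsq hκ.le
  have huq := hM q hq0
  simp only [W, barrier] at hRW ⊢
  linarith

end

theorem Continuous.exists_forall_le_of_vanishing {E : Type*} [NormedAddCommGroup E] [ProperSpace E]
    {g : E → ℝ} (hg : Continuous g)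
    (hlim : ∀ ε : ℝ, 0 < ε → ∃ K : ℝ, ∀ x : E, K ≤ ‖x‖ → |g x| ≤ ε)
    {x₁ : E} (hx₁ : g x₁ < 0) : ∃ x, ∀ y, g x ≤ g y := by
  obtain ⟨K, hK⟩ := hlim (-g x₁) (neg_pos.2 hx₁)
  refine hg.exists_forall_le' x₁ ?_
  filter_upwards [(isCompact_closedBall (0 : E) K).compl_mem_cocompact] with x hx
  have := hK x (lt_of_not_ge (by simpa using hx)).le
  linarith [neg_abs_le (g x)]

section
variable {n}

def weightedLaplacian (a : ℝ) (u : EuclideanSpace ℝ (Fin n) × ℝ → ℝ)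
    (q : EuclideanSpace ℝ (Fin n) × ℝ) : ℝ :=
  q.2 ^ a * (∑ i : Fin n, pdXX n i u q) + deriv (fun t : ℝ => t ^ a * pdY n u (q.1, t)) q.2

theorem le_weightedLaplacian_of_isLocalMin_add_barrier {a κ c γ : ℝ}
    {u : EuclideanSpace ℝ (Fin n) × ℝ → ℝ}
    (hu : ContDiffOn ℝ 2 u {q : EuclideanSpace ℝ (Fin n) × ℝ | 0 < q.2})
    {p : EuclideanSpace ℝ (Fin n) × ℝ} (hp : 0 < p.2)
    (hmin : IsLocalMin (fun q => u q + barrier a κ c γ q) p) :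
    2 * p.2 ^ a * (c * (a + 1) - n * κ) ≤ weightedLaplacian a u p := by
  obtain ⟨x, y⟩ := p
  have hline : ∀ (A : ℝ → EuclideanSpace ℝ (Fin n) × ℝ) (t : ℝ), ContDiff ℝ 2 A →
      0 < (A t).2 → ContDiffAt ℝ 2 (fun s => u (A s)) t := fun A t hA ht =>
    (hu.contDiffAt ((isOpen_lt continuous_const continuous_snd).mem_nhds ht)).comp t
      hA.contDiffAt
  have hhoriz : ∀ i : Fin n, -(2 * κ) ≤ pdXX n i u (x, y) := by
    intro i
    set e := EuclideanSpace.single i (1 : ℝ)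
    have := (IsLocalMin.comp_continuous (g := fun t : ℝ => (x + t • e, y)) (b := 0)
      (by simpa using hmin) (by fun_prop)).deriv_deriv_add_nonneg (f := fun t => u (x + t • e, y))
      (g := fun t => κ * ‖x + t • e‖ ^ 2 + (γ * y ^ (1 - a) - c * y ^ 2))
      (hline _ 0 (by fun_prop) hp)
      ((contDiff_const.mul ((contDiff_norm_sq ℝ).comp (by fun_prop))).add contDiff_const).contDiffAt
    simp only [deriv_add_const', deriv_const_mul_field', deriv_deriv_norm_add_smul_sq, e,
      PiLp.norm_single, norm_one] at this
    change -(2 * κ) ≤ deriv (deriv fun t => u (x + t • e, y)) 0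
    linarith
  have hvert : 2 * c * (a + 1) * y ^ a ≤ deriv (fun t : ℝ => t ^ a * pdY n u (x, t)) y := by
    have := (IsLocalMin.comp_continuous (g := fun t : ℝ => (x, t)) (b := y) hmin
      (by fun_prop)).deriv_rpow_mul_deriv_add_nonneg a (f := fun t => u (x, t))
      (g := fun t => κ * ‖x‖ ^ 2 + (γ * t ^ (1 - a) - c * t ^ 2)) hp
      (hline _ y (by fun_prop) hp) (by fun_prop (disch := exact hp.ne'))
    simp only [deriv_const_add'] at this
    rw [deriv_rpow_mul_deriv_rpow_sub_sq a c γ hp] at this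
    simpa [pdY] using this
  have hsum : -(n * (2 * κ)) ≤ ∑ i : Fin n, pdXX n i u (x, y) := by
    simpa using Finset.sum_le_sum fun i (_ : i ∈ Finset.univ) => hhoriz i
  have hya : 0 < y ^ a := Real.rpow_pos_of_pos hp a
  unfold weightedLaplacian
  linear_combination mul_le_mul_of_nonneg_left hsum hya.le + hvert

theorem le_add_barrier_of_le_on_slab_boundary {a κ c γ b M T : ℝ}
    {u : EuclideanSpace ℝ (Fin n) × ℝ → ℝ}
    (hucont : ContinuousOn u {q | 0 ≤ q.2}) (hu : ContDiffOn ℝ 2 u {q | 0 < q.2})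
    (heq : ∀ q : EuclideanSpace ℝ (Fin n) × ℝ, 0 < q.2 → weightedLaplacian a u q = 0)
    (hM : ∀ q : EuclideanSpace ℝ (Fin n) × ℝ, 0 ≤ q.2 → -M ≤ u q)
    (ha : a < 1) (hκ : 0 < κ) (hγ : 0 ≤ γ) (hκc : n * κ < c * (a + 1))
    (hbot : ∀ x, b ≤ u (x, 0) + barrier a κ c γ (x, 0))
    (htop : ∀ x, b ≤ u (x, T) + barrier a κ c γ (x, T))
    {q : EuclideanSpace ℝ (Fin n) × ℝ} (hq : 0 ≤ q.2) (hqT : q.2 ≤ T) :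
    b ≤ u q + barrier a κ c γ q := by
  obtain ⟨⟨x, y⟩, ⟨-, hy0, hyT⟩, hmin⟩ :=
    exists_isMinOn_add_barrier hucont hM ha hκ hγ (hq.trans hqT)
  refine le_trans ?_ (hmin ⟨trivial, hq, hqT⟩)
  rcases hy0.eq_or_lt with rfl | hy0
  · exact hbot x
  rcases hyT.eq_or_lt with rfl | hyT
  · exact htop x
  have hslab : univ ×ˢ Icc 0 T ∈ 𝓝 (x, y) :=
    prod_mem_nhds univ_mem (Icc_mem_nhds hy0 hyT)
  have := le_weightedLaplacian_of_isLocalMin_add_barrier hu hy0 (hmin.isLocalMin hslab)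
  rw [heq _ hy0] at this
  have : 0 < 2 * y ^ a * (c * (a + 1) - n * κ) :=
    mul_pos (mul_pos two_pos (Real.rpow_pos_of_pos hy0 a)) (sub_pos.2 hκc)
  linarith

theorem le_add_barrier_of_forall_le_trace {a b M T : ℝ}
    {u : EuclideanSpace ℝ (Fin n) × ℝ → ℝ} (ha1 : 0 < a + 1) (ha2 : a < 1)
    (hucont : ContinuousOn u {q | 0 ≤ q.2}) (hu : ContDiffOn ℝ 2 u {q | 0 < q.2})
    (heq : ∀ q : EuclideanSpace ℝ (Fin n) × ℝ, 0 < q.2 → weightedLaplacian a u q = 0)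
    (hM : ∀ q : EuclideanSpace ℝ (Fin n) × ℝ, 0 ≤ q.2 → |u q| ≤ M)
    (hb : ∀ x, b ≤ u (x, 0)) (hT : 0 < T) {q : EuclideanSpace ℝ (Fin n) × ℝ}
    (hq : 0 ≤ q.2) (hqT : q.2 ≤ T) :
    b ≤ u q + barrier a ((a + 1) / (n + 1) / T ^ 2) (1 / T ^ 2) ((2 * M + 1) / T ^ (1 - a)) q := by
  have hM0 : 0 ≤ M := (abs_nonneg _).trans (hM (0, 0) le_rfl)
  have hbM : b ≤ M := (hb 0).trans (abs_le.1 (hM (0, 0) le_rfl)).2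
  have hκx : ∀ x : EuclideanSpace ℝ (Fin n), 0 ≤ (a + 1) / (n + 1) / T ^ 2 * ‖x‖ ^ 2 :=
    fun x => by positivity
  refine le_add_barrier_of_le_on_slab_boundary hucont hu heq
    (fun q hq => (abs_le.1 (hM q hq)).1) ha2 (by positivity) (by positivity) ?_
    (fun x => ?_) (fun x => ?_) hq hqT
  · have hn : (n : ℝ) / (n + 1) < 1 := by rw [div_lt_one (by positivity)]; linarith
    calc n * ((a + 1) / (n + 1) / T ^ 2) = (a + 1) / T ^ 2 * (n / (n + 1)) := by ring
      _ < (a + 1) / T ^ 2 * 1 := mul_lt_mul_of_pos_left hn (by positivity)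
      _ = 1 / T ^ 2 * (a + 1) := by ring
  · rw [barrier_zero ha2]
    linarith [hb x, hκx x]
  · have hγT : (2 * M + 1) / T ^ (1 - a) * T ^ (1 - a) = 2 * M + 1 :=
      div_mul_cancel₀ _ (Real.rpow_pos_of_pos hT _).ne'
    have hcT : 1 / T ^ 2 * T ^ 2 = 1 := one_div_mul_cancel (by positivity)
    have huT := (abs_le.1 (hM (x, T) hT.le)).1
    simp only [barrier]
    linarith [hκx x]

theorem le_of_forall_le_trace {a b M : ℝ} {u : EuclideanSpace ℝ (Fin n) × ℝ → ℝ}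
    (ha1 : 0 < a + 1) (ha2 : a < 1)
    (hucont : ContinuousOn u {q | 0 ≤ q.2}) (hu : ContDiffOn ℝ 2 u {q | 0 < q.2})
    (heq : ∀ q : EuclideanSpace ℝ (Fin n) × ℝ, 0 < q.2 → weightedLaplacian a u q = 0)
    (hM : ∀ q : EuclideanSpace ℝ (Fin n) × ℝ, 0 ≤ q.2 → |u q| ≤ M)
    (hb : ∀ x, b ≤ u (x, 0)) {q : EuclideanSpace ℝ (Fin n) × ℝ} (hq : 0 ≤ q.2) :
    b ≤ u q := by
  have hbound : ∀ᶠ T in atTop, b ≤ u q +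
      barrier a ((a + 1) / (n + 1) / T ^ 2) (1 / T ^ 2) ((2 * M + 1) / T ^ (1 - a)) q := by
    filter_upwards [eventually_gt_atTop 0, eventually_ge_atTop q.2] with T hT hqT
    exact le_add_barrier_of_forall_le_trace ha1 ha2 hucont hu heq hM hb hT hq hqT
  have hlim : Tendsto (fun T => u q +
      barrier a ((a + 1) / (n + 1) / T ^ 2) (1 / T ^ 2) ((2 * M + 1) / T ^ (1 - a)) q)
      atTop (𝓝 (u q)) := by
    have h2 : Tendsto (fun T : ℝ => (T ^ 2)⁻¹) atTop (𝓝 0) :=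
      tendsto_inv_atTop_zero.comp (tendsto_pow_atTop two_ne_zero)
    have h3 : Tendsto (fun T : ℝ => (T ^ (1 - a))⁻¹) atTop (𝓝 0) :=
      tendsto_inv_atTop_zero.comp (tendsto_rpow_atTop (by linarith))
    have := tendsto_const_nhds (x := u q) |>.add
      ((h2.const_mul ((a + 1) / (n + 1) * ‖q.1‖ ^ 2 - q.2 ^ 2)).add
        (h3.const_mul ((2 * M + 1) * q.2 ^ (1 - a))))
    simp only [mul_zero, add_zero] at this
    refine this.congr fun T => ?_
    simp only [barrier]
    ring
  exact ge_of_tendsto hlim hbound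

theorem exists_forall_le_of_le_zero {a M : ℝ} {u : EuclideanSpace ℝ (Fin n) × ℝ → ℝ}
    (ha1 : 0 < a + 1) (ha2 : a < 1)
    (hucont : ContinuousOn u {q | 0 ≤ q.2}) (hu : ContDiffOn ℝ 2 u {q | 0 < q.2})
    (heq : ∀ q : EuclideanSpace ℝ (Fin n) × ℝ, 0 < q.2 → weightedLaplacian a u q = 0)
    (hM : ∀ q : EuclideanSpace ℝ (Fin n) × ℝ, 0 ≤ q.2 → |u q| ≤ M)
    (hlim : ∀ ε : ℝ, 0 < ε → ∃ K : ℝ, ∀ x : EuclideanSpace ℝ (Fin n), K ≤ ‖x‖ →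
      |u (x, 0)| ≤ ε)
    {q : EuclideanSpace ℝ (Fin n) × ℝ} (hq : 0 ≤ q.2) (hq0 : u q ≤ 0) :
    ∃ p : EuclideanSpace ℝ (Fin n) × ℝ, 0 ≤ p.2 ∧ ∀ q', 0 ≤ q'.2 → u p ≤ u q' := by
  by_cases htrace : ∀ x, 0 ≤ u (x, 0)
  · exact ⟨q, hq, fun q' hq' =>
      hq0.trans (le_of_forall_le_trace ha1 ha2 hucont hu heq hM htrace hq')⟩
  obtain ⟨x₁, hx₁⟩ : ∃ x, u (x, 0) < 0 := by simpa using htrace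
  obtain ⟨xm, hxm⟩ := Continuous.exists_forall_le_of_vanishing
    (hucont.comp_continuous (by fun_prop) fun x => le_refl (0 : ℝ)) hlim hx₁
  exact ⟨(xm, 0), le_rfl, fun q' hq' => le_of_forall_le_trace ha1 ha2 hucont hu heq hM hxm hq'⟩

end

theorem max_principle_with_hopf (s a : ℝ) (hs : s ∈ Ioo (0 : ℝ) 1) (ha : a = 1 - 2 * s)
    (u : EuclideanSpace ℝ (Fin n) × ℝ → ℝ)
    (d : EuclideanSpace ℝ (Fin n) → ℝ) (νa : EuclideanSpace ℝ (Fin n) → ℝ)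
    (H : Set (EuclideanSpace ℝ (Fin n)))
    (hucont : ContinuousOn u {q : EuclideanSpace ℝ (Fin n) × ℝ | 0 ≤ q.2})
    (hubdd : ∃ M : ℝ, ∀ q : EuclideanSpace ℝ (Fin n) × ℝ, 0 ≤ q.2 → |u q| ≤ M)
    (husmooth : ContDiffOn ℝ 2 u {q : EuclideanSpace ℝ (Fin n) × ℝ | 0 < q.2})
    -- the equation `div(y^a ∇u) = 0` in the open half-space
    (heq : ∀ q : EuclideanSpace ℝ (Fin n) × ℝ, 0 < q.2 →
      q.2 ^ a * (∑ i : Fin n, pdXX n i u q) +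
        deriv (fun t : ℝ => t ^ a * pdY n u (q.1, t)) q.2 = 0)
    -- the boundary inequality `∂u/∂ν^a + d(x)u ≥ 0`
    (hbdry : ∀ x : EuclideanSpace ℝ (Fin n), 0 ≤ νa x + d x * u (x, 0))
    -- `u(x,0) → 0` as `|x| → ∞`
    (hlim : ∀ ε : ℝ, 0 < ε → ∃ K : ℝ, ∀ x : EuclideanSpace ℝ (Fin n), K ≤ ‖x‖ →
      |u (x, 0)| ≤ ε)
    (hH : H.Nonempty)
    (hpos : ∀ x ∈ H, 0 < u (x, 0))
    (hd : ∀ x ∉ H, 0 ≤ d x)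
    -- strong maximum principle: a minimum at an interior point forces `u` constant
    (hSMP : ∀ q : EuclideanSpace ℝ (Fin n) × ℝ, 0 < q.2 →
      (∀ q' : EuclideanSpace ℝ (Fin n) × ℝ, 0 ≤ q'.2 → u q ≤ u q') →
      ∃ c : ℝ, ∀ q' : EuclideanSpace ℝ (Fin n) × ℝ, 0 ≤ q'.2 → u q' = c)
    -- Hopf lemma: at a boundary minimum of a nonconstant solution, `∂u/∂ν^a < 0`
    (hHopf : ∀ x₀ : EuclideanSpace ℝ (Fin n),
      (∀ q' : EuclideanSpace ℝ (Fin n) × ℝ, 0 ≤ q'.2 → u (x₀, 0) ≤ u q') →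
      (¬ ∃ c : ℝ, ∀ q' : EuclideanSpace ℝ (Fin n) × ℝ, 0 ≤ q'.2 → u q' = c) →
      νa x₀ < 0) :
    ∀ q : EuclideanSpace ℝ (Fin n) × ℝ, 0 ≤ q.2 → 0 < u q := by
  have ha1 : 0 < a + 1 := by linarith [hs.2]
  have ha2 : a < 1 := by linarith [hs.1]
  obtain ⟨M, hM⟩ := hubdd
  intro q hq
  by_contra! hq0
  obtain ⟨⟨x, y⟩, hy, hmin⟩ :=
    exists_forall_le_of_le_zero ha1 ha2 hucont husmooth heq hM hlim hq hq0
  have hneg : u (x, y) ≤ 0 := (hmin q hq).trans hq0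
  have hconst : ¬ ∃ c : ℝ, ∀ q' : EuclideanSpace ℝ (Fin n) × ℝ, 0 ≤ q'.2 → u q' = c := by
    rintro ⟨c, hc⟩
    obtain ⟨xH, hxH⟩ := hH
    linarith [hpos xH hxH, hc (xH, 0) le_rfl, hc (x, y) hy]
  rcases hy.eq_or_lt with rfl | hy
  · have hxH : x ∉ H := fun hx => (hpos x hx).not_ge hneg
    have := mul_nonpos_of_nonneg_of_nonpos (hd x hxH) hneg
    linarith [hHopf x hmin hconst, hbdry x]
  · exact hconst (hSMP _ hy hmin)

end
end
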